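/- Define ψ_a(u) = ⟨a, u⟩²/‖u‖² for a unit vector a and nonzero u. Then ∇ψ_a(u) = (2⟨a,u⟩/‖u‖⁴)(a‖u‖² − u⟨a,u⟩), and consequently ‖∇ψ_a(u)‖ ≥ (2/‖u‖) cos β (1 − cos β), where β ∈ [0, π/2] is the angle with cos β = |⟨a,u⟩|/‖u‖. -/

import Mathlib

/-!
Writing `c = ⟪a, u⟫`, the quotient rule gives `∇ψ_a(u) = (2c/‖u‖⁴)(‖u‖² a - c u)`, and for a unit
vector `a` Pythagoras gives `‖‖u‖² a - c u‖² = ‖u‖² (‖u‖² - c²)`. Hence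
`‖∇ψ_a(u)‖ = (2/‖u‖) cos β sin β`, and the bound follows from `1 - cos β ≤ sin β`.
-/

open scoped RealInnerProductSpace

section
variable {E : Type*} [NormedAddCommGroup E] [InnerProductSpace ℝ E]

theorem hasGradientAt_inner_sq_div_norm_sq [CompleteSpace E] (a : E) {u : E} (hu : u ≠ 0) :
    HasGradientAt (fun v => ⟪a, v⟫ ^ 2 / ‖v‖ ^ 2)
      ((2 * ⟪a, u⟫ / ‖u‖ ^ 4) • (‖u‖ ^ 2 • a - ⟪a, u⟫ • u)) u := by
  have hu2 : ‖u‖ ^ 2 ≠ 0 := by positivity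
  have hnum : HasFDerivAt (fun v : E => ⟪a, v⟫ ^ 2) ((2 • ⟪a, u⟫ ^ 1) • innerSL ℝ a) u :=
    (innerSL ℝ a).hasFDerivAt.pow 2
  have hden : HasFDerivAt (fun v : E => (‖v‖ ^ 2)⁻¹)
      ((-((‖u‖ ^ 2) ^ 2)⁻¹) • (2 • innerSL ℝ u)) u :=
    (hasDerivAt_inv hu2).comp_hasFDerivAt u (by simpa using (hasFDerivAt_id u).norm_sq)
  rw [hasGradientAt_iff_hasFDerivAt]
  simp_rw [div_eq_mul_inv (⟪a, _⟫ ^ 2)]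
  refine (hnum.fun_mul hden).congr_fderiv ?_
  ext v
  simp only [InnerProductSpace.toDual_apply_apply, add_apply, smul_apply, innerSL_apply_apply,
    inner_smul_left, inner_sub_left, smul_eq_mul, conj_trivial, real_inner_comm u a]
  field_simp
  ring

theorem norm_sq_smul_sub_inner_smul (a u : E) :
    ‖‖u‖ ^ 2 • a - ⟪a, u⟫ • u‖ ^ 2 = ‖u‖ ^ 2 * (‖a‖ ^ 2 * ‖u‖ ^ 2 - ⟪a, u⟫ ^ 2) := by
  rw [norm_sub_sq_real, norm_smul, norm_smul, inner_smul_left, inner_smul_right,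
    real_inner_comm u a]
  simp only [Real.norm_eq_abs, conj_trivial, mul_pow, sq_abs, abs_pow]
  ring

theorem norm_gradient_inner_sq_div_norm_sq [CompleteSpace E] {a : E} (ha : ‖a‖ = 1) {u : E}
    (hu : u ≠ 0) :
    ‖gradient (fun v => ⟪a, v⟫ ^ 2 / ‖v‖ ^ 2) u‖ =
      2 * |⟪a, u⟫| * √(‖u‖ ^ 2 - ⟪a, u⟫ ^ 2) / ‖u‖ ^ 3 := by
  have hw : ‖‖u‖ ^ 2 • a - ⟪a, u⟫ • u‖ = ‖u‖ * √(‖u‖ ^ 2 - ⟪a, u⟫ ^ 2) := by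
    rw [← Real.sqrt_sq (norm_nonneg _), norm_sq_smul_sub_inner_smul, ha, one_pow, one_mul,
      Real.sqrt_mul (by positivity), Real.sqrt_sq (norm_nonneg _)]
  have hu4 : (0 : ℝ) < ‖u‖ ^ 4 := by positivity
  rw [(hasGradientAt_inner_sq_div_norm_sq a hu).gradient, norm_smul, hw, Real.norm_eq_abs,
    abs_div, abs_mul, abs_two, abs_of_pos hu4]
  field_simp

end

theorem sub_le_sqrt_sq_sub_sq {m r : ℝ} (hm : 0 ≤ m) (hmr : m ≤ r) : r - m ≤ √(r ^ 2 - m ^ 2) :=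
  (Real.le_sqrt (by linarith) (by nlinarith)).mpr (by nlinarith)

theorem stmt8 {d : ℕ} (a : EuclideanSpace ℝ (Fin d)) (ha : ‖a‖ = 1)
    (u : EuclideanSpace ℝ (Fin d)) (hu : u ≠ 0) :
    gradient (fun v : EuclideanSpace ℝ (Fin d) => ⟪a, v⟫ ^ 2 / ‖v‖ ^ 2) u =
        (2 * ⟪a, u⟫ / ‖u‖ ^ 4) • (‖u‖ ^ 2 • a - ⟪a, u⟫ • u) ∧
      (2 / ‖u‖) * (|⟪a, u⟫| / ‖u‖) * (1 - |⟪a, u⟫| / ‖u‖) ≤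
        ‖gradient (fun v : EuclideanSpace ℝ (Fin d) => ⟪a, v⟫ ^ 2 / ‖v‖ ^ 2) u‖ := by
  refine ⟨(hasGradientAt_inner_sq_div_norm_sq a hu).gradient, ?_⟩
  have hr : 0 < ‖u‖ := norm_pos_iff.mpr hu
  have hcs : |⟪a, u⟫| ≤ ‖u‖ := by simpa [ha] using abs_real_inner_le_norm a u
  rw [norm_gradient_inner_sq_div_norm_sq ha hu, ← sq_abs ⟪a, u⟫]
  calc (2 / ‖u‖) * (|⟪a, u⟫| / ‖u‖) * (1 - |⟪a, u⟫| / ‖u‖)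
      = 2 * |⟪a, u⟫| * (‖u‖ - |⟪a, u⟫|) / ‖u‖ ^ 3 := by field_simp
    _ ≤ 2 * |⟪a, u⟫| * √(‖u‖ ^ 2 - |⟪a, u⟫| ^ 2) / ‖u‖ ^ 3 := by
      gcongr
      exact sub_le_sqrt_sq_sub_sq (abs_nonneg _) hcs
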